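/- arXiv:2409.18461 — 3 statements merged into one kernel-verified Lean document; each statement's English description precedes it below -/
import Mathlib

section
/- Suppose f : X → E → Y is weight disentangled with respect to a base parameter θ₀ ∈ E, task vectors (τ_i)_{i∈ι}, and supports (D_i)_{i∈ι}, and let y : X → Y be a labeling function. Fix an index i₀ ∈ ι and a coefficient λ_{i₀} ∈ ℝ, and assume the single-task edited model fits the labels on the exclusive region of task i₀, i.e. f x (θ₀ + λ_{i₀} • τ_{i₀}) = y x for every x ∈ D_{i₀} with x ∉ D_j for all j ≠ i₀. Then for every choice of the remaining coefficients λ_j ∈ ℝ (j ≠ i₀), the merged model still fits these labels: f x (θ₀ + Σ_{j∈ι} λ_j • τ_j) = y x for every such x. In other words, task arithmetic knowledge integration entirely preserves the previously acquired knowledge on a task's exclusive support region. -/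
/-- A parametric function `f : X → E → Y` is *weight disentangled* with respect to a base
parameter `θ₀`, task vectors `τ i`, and supports `D i`, if there are component functions
`g i` and `g₀` such that the output of the merged model decomposes as the sum of the
components, each component `g i` vanishes off the support `D i`, and the residual `g₀`
vanishes on the union of the supports. -/
def WeightDisentangled {X Y E ι : Type*} [AddCommMonoid Y] [AddCommGroup E] [Module ℝ E]
    [Fintype ι] (f : X → E → Y) (θ₀ : E) (τ : ι → E) (D : ι → Set X) : Prop :=
  ∃ (g : ι → X → E → Y) (g₀ : X → Y),
    (∀ (α : ι → ℝ) (x : X), f x (θ₀ + ∑ i, α i • τ i) = (∑ i, g i x (α i • τ i)) + g₀ x) ∧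
    (∀ (i : ι) (x : X), x ∉ D i → ∀ α : ℝ, g i x (α • τ i) = 0) ∧
    (∀ x ∈ ⋃ i, D i, g₀ x = 0)

/-- Task arithmetic knowledge integration entirely preserves previously acquired knowledge:
if the model edited by the single task vector `τ i₀` with coefficient `lam i₀` fits the
labels on the exclusive region of task `i₀`, then the merged model (with any choice of the
remaining coefficients) still fits those labels there. -/
theorem weightDisentangled_merged_preserves_fit
    {X Y E ι : Type*} [AddCommMonoid Y] [AddCommGroup E] [Module ℝ E] [Fintype ι]
    (f : X → E → Y) (θ₀ : E) (τ : ι → E) (D : ι → Set X)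
    (hf : WeightDisentangled f θ₀ τ D)
    (y : X → Y) (i₀ : ι) (lam : ι → ℝ)
    (hfit : ∀ x ∈ D i₀, (∀ j, j ≠ i₀ → x ∉ D j) → f x (θ₀ + lam i₀ • τ i₀) = y x) :
    ∀ x ∈ D i₀, (∀ j, j ≠ i₀ → x ∉ D j) → f x (θ₀ + ∑ j, lam j • τ j) = y x := by
  classical
  obtain ⟨g, g₀, hdec, hvan, hres⟩ := hf
  intro x hx hexc
  have hg0 : g₀ x = 0 := hres x (Set.mem_iUnion.mpr ⟨i₀, hx⟩)
  have key : ∀ β : ι → ℝ, f x (θ₀ + ∑ j, β j • τ j) = g i₀ x (β i₀ • τ i₀) := by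
    intro β
    rw [hdec β x, hg0, add_zero,
      Finset.sum_eq_single i₀ (fun j _ hj => hvan j x (hexc j hj) (β j)) (by simp)]
  have hsingle : θ₀ + lam i₀ • τ i₀
      = θ₀ + ∑ j, (if j = i₀ then lam i₀ else 0) • τ j := by
    congr 1
    rw [Finset.sum_eq_single i₀ (by intro j _ hj; simp [hj]) (by simp)]
    simp
  have h1 := key lam
  have h2 := key (fun j => if j = i₀ then lam i₀ else 0)
  simp only [eq_self_iff_true, if_true] at h2
  rw [h1, ← h2, ← hsingle]
  exact hfit x hx hexc
end

section
/- Suppose f : X → E → Y is weight disentangled with respect to a base parameter θ₀ ∈ E, task vectors (τ_i)_{i∈ι}, and supports (D_i)_{i∈ι}, where the supports are pairwise disjoint, and let y : X → Y be a labeling function. Let λ : ι → ℝ be merging coefficients such that for every i ∈ ι and every x ∈ D_i, f x (θ₀ + λ_i • τ_i) = y x. Let X carry a measurable space structure, let μ be a measure on X concentrated on the union of the supports (i.e. μ(X \ ⋃_{i∈ι} D_i) = 0), and let ℓ : Y → Y → ℝ be a loss function with ℓ a a = 0 for every a ∈ Y. Then the merged model θ_merged = θ₀ + Σ_{i∈ι}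 λ_i • τ_i has zero expected loss: ∫ ℓ (f x θ_merged) (y x) dμ(x) = 0. -/
open MeasureTheory

/-- With pairwise disjoint supports, if each single-task edited model fits the labels on its
own support, then the task-arithmetic merged model has zero expected loss with respect to any
measure concentrated on the union of the supports, for any loss function vanishing on the
diagonal. -/
theorem weightDisentangled_merged_zero_expected_loss
    {X Y E ι : Type*} [AddCommMonoid Y] [AddCommGroup E] [Module ℝ E] [Fintype ι]
    (f : X → E → Y) (θ₀ : E) (τ : ι → E) (D : ι → Set X)
    (hf : WeightDisentangled f θ₀ τ D)
    (hdisj : ∀ i j : ι, i ≠ j → D i ∩ D j = ∅)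
    (y : X → Y) (lam : ι → ℝ)
    (hfit : ∀ i : ι, ∀ x ∈ D i, f x (θ₀ + lam i • τ i) = y x)
    [MeasurableSpace X] (μ : Measure X)
    (hμ : μ (Set.univ \ ⋃ i, D i) = 0)
    (ℓ : Y → Y → ℝ) (hℓ : ∀ a : Y, ℓ a a = 0) :
    ∫ x, ℓ (f x (θ₀ + ∑ i, lam i • τ i)) (y x) ∂μ = 0 := by
  classical
  obtain ⟨g, g₀, hdecomp, hvanish, hres⟩ := hf
  have key : ∀ x ∈ ⋃ i, D i, f x (θ₀ + ∑ i, lam i • τ i) = y x := by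
    intro x hx
    obtain ⟨_, ⟨j, rfl⟩, hxj⟩ := hx
    have hnot : ∀ i, i ≠ j → x ∉ D i := by
      intro i hij hxi
      have := hdisj i j hij
      exact absurd (Set.mem_inter hxi hxj) (by simp [this])
    have h1 : f x (θ₀ + ∑ i, lam i • τ i) = g j x (lam j • τ j) := by
      rw [hdecomp lam x, hres x ⟨D j, ⟨j, rfl⟩, hxj⟩, add_zero,
        Finset.sum_eq_single j (fun i _ hij => hvanish i x (hnot i hij) (lam i))
        (fun h => absurd (Finset.mem_univ j) h)]
    have h2 : f x (θ₀ + lam j • τ j) = g j x (lam j • τ j) := by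
      have := hdecomp (fun i => if i = j then lam j else 0) x
      rw [Finset.sum_eq_single j (by intro i _ hij; simp [hij])
        (fun h => absurd (Finset.mem_univ j) h)] at this
      simp only [if_pos rfl, if_true] at this
      rw [this, hres x ⟨D j, ⟨j, rfl⟩, hxj⟩, add_zero,
        Finset.sum_eq_single j (by
          intro i _ hij
          simpa [hij] using hvanish i x (hnot i hij) 0)
        (fun h => absurd (Finset.mem_univ j) h)]
      simp
    rw [h1, ← h2, hfit j x hxj]
  have hae : (fun x => ℓ (f x (θ₀ + ∑ i, lam i • τ i)) (y x)) =ᵐ[μ] 0 := by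
    refine Filter.eventuallyEq_of_mem (s := ⋃ i, D i) ?_ ?_
    · rw [mem_ae_iff]
      have : (⋃ i, D i)ᶜ = Set.univ \ ⋃ i, D i := by simp [Set.diff_eq]
      rw [this]; exact hμ
    · intro x hx
      simp [key x hx, hℓ]
  rw [integral_congr_ae hae]
  simp
end

section
/- Suppose f : X → E → Y is weight disentangled with respect to a base parameter θ₀ ∈ E, task vectors (τ_i)_{i∈ι}, and supports (D_i)_{i∈ι}, and let y : X → Y be a labeling function and ℓ : Y → Y → ℝ a loss function. Fix an index i₀ ∈ ι, let X carry a measurable space structure, and let μ be a measure on X concentrated on the exclusive region of task i₀, i.e. μ(X \ (D_{i₀} \ ⋃_{j≠i₀} D_j)) = 0. Then for every coefficient vector λ : ι → ℝ, the expected loss of the merged model equals the expected loss of the single-task edited model: ∫ ℓ (f x (θ₀ + Σ_{j∈ι} λ_j • τ_j)) (y x) dμ(x) = ∫ ℓ (f x (θ₀ + λ_{i₀} • τ_{i₀})) (y x) dμ(x). -/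
open MeasureTheory

/-- For a measure concentrated on the exclusive region of task `i₀`, the expected loss of the
task-arithmetic merged model equals the expected loss of the model edited by the single task
vector `τ i₀` alone. -/
theorem weightDisentangled_expected_loss_merged_eq_single
    {X Y E ι : Type*} [AddCommMonoid Y] [AddCommGroup E] [Module ℝ E] [Fintype ι]
    (f : X → E → Y) (θ₀ : E) (τ : ι → E) (D : ι → Set X)
    (hf : WeightDisentangled f θ₀ τ D)
    (y : X → Y) (ℓ : Y → Y → ℝ) (i₀ : ι)
    [MeasurableSpace X] (μ : Measure X)
    (hμ : μ (Set.univ \ (D i₀ \ ⋃ (j : ι) (_ : j ≠ i₀), D j)) = 0)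
    (lam : ι → ℝ) :
    ∫ x, ℓ (f x (θ₀ + ∑ j, lam j • τ j)) (y x) ∂μ =
      ∫ x, ℓ (f x (θ₀ + lam i₀ • τ i₀)) (y x) ∂μ := by
  obtain ⟨g, g₀, hdec, hvan, hres⟩ := hf
  classical
  apply integral_congr_ae
  have hae : ∀ᵐ x ∂μ, x ∈ D i₀ \ ⋃ (j : ι) (_ : j ≠ i₀), D j := by
    rw [ae_iff]
    refine measure_mono_null ?_ hμ
    intro x hx
    exact ⟨Set.mem_univ x, hx⟩
  filter_upwards [hae] with x hx
  obtain ⟨hxi, hxj⟩ := hx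
  have key : f x (θ₀ + ∑ j, lam j • τ j) = f x (θ₀ + lam i₀ • τ i₀) := by
    have h1 := hdec lam x
    have h2 := hdec ((Pi.single i₀ (lam i₀) : ι → ℝ)) x
    have hsingle : (∑ j, (Pi.single i₀ (lam i₀) : ι → ℝ) j • τ j) = lam i₀ • τ i₀ := by
      rw [Finset.sum_eq_single i₀]
      · simp
      · intro j _ hj; simp [Pi.single_eq_of_ne hj]
      · simp
    rw [hsingle] at h2
    have hg0 : g₀ x = 0 := hres x (Set.mem_iUnion.mpr ⟨i₀, hxi⟩)
    have hvanj : ∀ j, j ≠ i₀ → x ∉ D j := by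
      intro j hj hxDj
      exact hxj (Set.mem_iUnion.mpr ⟨j, Set.mem_iUnion.mpr ⟨hj, hxDj⟩⟩)
    have hsum : (∑ j, g j x (lam j • τ j)) = g i₀ x (lam i₀ • τ i₀) := by
      rw [Finset.sum_eq_single i₀]
      · intro j _ hj; exact hvan j x (hvanj j hj) (lam j)
      · simp
    have hsum2 : (∑ j, g j x ((Pi.single i₀ (lam i₀) : ι → ℝ) j • τ j)) = g i₀ x (lam i₀ • τ i₀) := by
      rw [Finset.sum_eq_single i₀]
      · simp
      · intro j _ hj
        rw [Pi.single_eq_of_ne hj]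
        exact hvan j x (hvanj j hj) 0
      · simp
    rw [h1, h2, hsum, hsum2, hg0]
  rw [key]
end
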